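/- Let (Δ,u) be a labeled polytope in ℝⁿ with 0 in the interior of Δ, and set λ = max_{1≤l≤d} L_l(0) (so λ > 0). Then for every b ∈ Ω: F(b) ≥ (2n/λ)ⁿ · Z₀(b). -/

import Mathlib

open scoped RealInnerProductSpace
open MeasureTheory

noncomputable section

/-- A labeled polytope datum in `ℝⁿ`: `d` inward normals `u l` together with
constants `lam l`, giving defining affine functions `L l x = ⟪u l, x⟫ + lam l`. -/
structure LabeledPolytope (n d : ℕ) where
  u : Fin d → EuclideanSpace ℝ (Fin n)
  lam : Fin d → ℝ

namespace LabeledPolytope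

variable {n d : ℕ}

/-- The defining affine functions `L_l`. -/
def L (P : LabeledPolytope n d) (l : Fin d) (x : EuclideanSpace ℝ (Fin n)) : ℝ :=
  ⟪P.u l, x⟫ + P.lam l

/-- The polytope `Δ = {x | L_l x ≥ 0 ∀ l}`. -/
def Delta (P : LabeledPolytope n d) : Set (EuclideanSpace ℝ (Fin n)) :=
  {x | ∀ l, 0 ≤ P.L l x}

/-- The facet `F_l = Δ ∩ {L_l = 0}`. -/
def Facet (P : LabeledPolytope n d) (l : Fin d) : Set (EuclideanSpace ℝ (Fin n)) :=
  {x | x ∈ P.Delta ∧ P.L l x = 0}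

/-- `(Δ,u)` is a labeled polytope: `n ≥ 1`, `Δ` is a compact polytope with nonempty
interior, and each `F_l` is a nonempty facet of dimension `n - 1`. -/
structure IsLabeledPolytope (P : LabeledPolytope n d) : Prop where
  npos : 1 ≤ n
  compact : IsCompact P.Delta
  int_nonempty : (interior P.Delta).Nonempty
  facet_nonempty : ∀ l, (P.Facet l).Nonempty
  facet_dim : ∀ l, Module.finrank ℝ (affineSpan ℝ (P.Facet l)).direction = n - 1

/-- The value of the affine function `b = (b₀, b′)` at `x`. -/
def bval (b : ℝ × EuclideanSpace ℝ (Fin n)) (x : EuclideanSpace ℝ (Fin n)) : ℝ :=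
  b.1 + ⟪b.2, x⟫

/-- The pairing `⟨(y₀,y),(b₀,b′)⟩ = b₀ y₀ + ⟨b′, y⟩`. -/
def pairing (y b : ℝ × EuclideanSpace ℝ (Fin n)) : ℝ :=
  b.1 * y.1 + ⟪b.2, y.2⟫

/-- The cone `C(Δ) = {(y₀,y) | λ_l y₀ + ⟨u_l, y⟩ ≥ 0 ∀ l} ⊆ ℝ^{1+n}`. -/
def Cone (P : LabeledPolytope n d) : Set (ℝ × EuclideanSpace ℝ (Fin n)) :=
  {y | ∀ l, 0 ≤ P.lam l * y.1 + ⟪P.u l, y.2⟫}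

/-- The dual cone `C*(Δ)`. -/
def Cstar (P : LabeledPolytope n d) : Set (ℝ × EuclideanSpace ℝ (Fin n)) :=
  {b | ∀ y ∈ P.Cone, 0 ≤ pairing y b}

/-- `C*₊(Δ)`: affine functions strictly positive on `Δ`. -/
def CstarPlus (P : LabeledPolytope n d) : Set (ℝ × EuclideanSpace ℝ (Fin n)) :=
  {b | ∀ μ ∈ P.Delta, 0 < bval b μ}

/-- The map `Ψ_b(μ) = (1,μ)/b(μ)`. -/
def Psi (b : ℝ × EuclideanSpace ℝ (Fin n)) (x : EuclideanSpace ℝ (Fin n)) :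
    ℝ × EuclideanSpace ℝ (Fin n) :=
  (bval b x)⁻¹ • ((1 : ℝ), x)

/-- The boundary measure `σ_l`: `‖u_l‖⁻¹` times the `(n-1)`-dimensional Hausdorff
measure restricted to the facet `F_l`. -/
def facetMeasure (P : LabeledPolytope n d) (l : Fin d) :
    Measure (EuclideanSpace ℝ (Fin n)) :=
  (ENNReal.ofReal ‖P.u l‖⁻¹) • (μH[(n : ℝ) - 1]).restrict (P.Facet l)

/-- `W₀₀(b) = ∫_Δ b(μ)^{-(n+1)} dμ`. -/
def W00 (P : LabeledPolytope n d) (b : ℝ × EuclideanSpace ℝ (Fin n)) : ℝ :=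
  ∫ μ in P.Delta, (bval b μ ^ (n + 1))⁻¹

/-- `W_{i0}(b) = ∫_Δ μ_i b(μ)^{-(n+2)} dμ`. -/
def Wi0 (P : LabeledPolytope n d) (i : Fin n) (b : ℝ × EuclideanSpace ℝ (Fin n)) : ℝ :=
  ∫ μ in P.Delta, μ i * (bval b μ ^ (n + 2))⁻¹

/-- `Z₀(b) = 2 Σ_l ∫_{F_l} b(μ)^{-n} dσ_l`. -/
def Z0 (P : LabeledPolytope n d) (b : ℝ × EuclideanSpace ℝ (Fin n)) : ℝ :=
  2 * ∑ l, ∫ μ, (bval b μ ^ n)⁻¹ ∂(P.facetMeasure l)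

/-- `Z_i(b) = 2 Σ_l ∫_{F_l} μ_i b(μ)^{-(n+1)} dσ_l`. -/
def Zi (P : LabeledPolytope n d) (i : Fin n) (b : ℝ × EuclideanSpace ℝ (Fin n)) : ℝ :=
  2 * ∑ l, ∫ μ, μ i * (bval b μ ^ (n + 1))⁻¹ ∂(P.facetMeasure l)

/-- `Ω = {b ∈ C*₊(Δ) : b₀ = 1}`, viewed as an open subset of `ℝⁿ` via `b ↔ b′`. -/
def Omega (P : LabeledPolytope n d) : Set (EuclideanSpace ℝ (Fin n)) :=
  {b' | ((1 : ℝ), b') ∈ P.CstarPlus}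

/-- The functional `F(b) = Z₀(b)^{n+1} / W₀₀(b)ⁿ` as a function of `b′` (with `b₀ = 1`). -/
def Fcal (P : LabeledPolytope n d) (b' : EuclideanSpace ℝ (Fin n)) : ℝ :=
  P.Z0 (1, b') ^ (n + 1) / P.W00 (1, b') ^ n

end LabeledPolytope

/-!
Since `0 ∈ interior Δ`, every point of `Δ \ {0}` lies on a segment from `0` to a facet, so up to
the null set `{0}` the polytope is the union of the cones `coneOver F_l`. In orthonormal coordinates
whose first axis is `u_l / ‖u_l‖`, the facet `F_l` lies in the hyperplane `{w₀ = -c}` with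
`c = λ_l / ‖u_l‖`, and `(t, z) ↦ t • (-c, z)` parametrizes the cone with Jacobian `c tⁿ⁻¹`. As
`b(tμ) = 1 + t (b(μ) - 1)`, the `t`-integral is elementary and gives
`∫_{cone} b^{-(n+1)} = (c / n) ∫ b^{-n} dz` over the facet in the coordinates `z`. Lebesgue measure
in `z` is at most `μH[n-1]` on the facet (the coordinate projection is 1-Lipschitz for the sup
metric; `μH` is not normalised to agree with Lebesgue measure on Euclidean space, so this step is
only an inequality). Summing over facets, `W₀₀(b) ≤ λ / (2n) · Z₀(b)`, and the bound on
`F(b) = Z₀^{n+1} / W₀₀ⁿ` follows.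
-/

open Set Function
open scoped ENNReal NNReal

theorem integral_Ioc_pow_mul_inv_one_add_mul_pow (m : ℕ) {β : ℝ} (hβ : 0 < β) :
    ∫ t in Ioc (0 : ℝ) 1, t ^ m * ((1 + t * (β - 1)) ^ (m + 2))⁻¹ = ((m + 1) * β ^ (m + 1))⁻¹ := by
  have hD : ∀ t ∈ Icc (0 : ℝ) 1, 0 < 1 + t * (β - 1) := fun t ⟨ht0, ht1⟩ => by
    nlinarith [mul_nonneg (sub_nonneg.2 ht1) hβ.le, mul_nonneg ht0 hβ.le]
  have hderiv : ∀ t ∈ uIcc (0 : ℝ) 1,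
      HasDerivAt (fun t => t ^ (m + 1) * ((m + 1) * (1 + t * (β - 1)) ^ (m + 1))⁻¹)
        (t ^ m * ((1 + t * (β - 1)) ^ (m + 2))⁻¹) t := by
    intro t ht
    rw [uIcc_of_le zero_le_one] at ht
    have hDt := (hD t ht).ne'
    have hden : HasDerivAt (fun t : ℝ => (m + 1) * (1 + t * (β - 1)) ^ (m + 1))
        ((m + 1) * ((m + 1) * (1 + t * (β - 1)) ^ m * (β - 1))) t := by
      have hlin : HasDerivAt (fun t : ℝ => 1 + t * (β - 1)) (β - 1) t := by
        simpa using ((hasDerivAt_id t).mul_const (β - 1)).const_add 1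
      simpa using (hlin.fun_pow (m + 1)).const_mul ((m : ℝ) + 1)
    refine ((hasDerivAt_pow (m + 1) t).mul (hden.inv (by positivity))).congr_deriv ?_
    simp only [Pi.inv_apply]
    field_simp
    push_cast
    ring
  have hcont : ContinuousOn (fun t : ℝ => t ^ m * ((1 + t * (β - 1)) ^ (m + 2))⁻¹) (uIcc 0 1) := by
    rw [uIcc_of_le zero_le_one]
    exact (continuous_pow m).continuousOn.mul <| ContinuousOn.inv₀ (by fun_prop)
      fun t ht => pow_ne_zero _ (hD t ht).ne'
  rw [← intervalIntegral.integral_of_le zero_le_one,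
    intervalIntegral.integral_eq_sub_of_hasDerivAt hderiv hcont.intervalIntegrable]
  norm_num

theorem setIntegral_Ioc_prod_pow_mul_inv_one_add_mul_pow {ι : Type*} [Fintype ι] {K : Set (ι → ℝ)}
    (hK : IsCompact K) {g : (ι → ℝ) → ℝ} (hg : ContinuousOn g K) (hpos : ∀ z ∈ K, 0 < g z)
    (m : ℕ) :
    ∫ p in Ioc (0 : ℝ) 1 ×ˢ K, p.1 ^ m * ((1 + p.1 * (g p.2 - 1)) ^ (m + 2))⁻¹ =
      ((m : ℝ) + 1)⁻¹ * ∫ z in K, (g z ^ (m + 1))⁻¹ := by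
  have hD : ∀ p ∈ Icc (0 : ℝ) 1 ×ˢ K, 0 < 1 + p.1 * (g p.2 - 1) := fun p ⟨⟨ht0, ht1⟩, hz⟩ => by
    nlinarith [mul_nonneg (sub_nonneg.2 ht1) (hpos _ hz).le, mul_nonneg ht0 (hpos _ hz).le,
      hpos _ hz]
  have hF : IntegrableOn (fun p : ℝ × (ι → ℝ) => p.1 ^ m * ((1 + p.1 * (g p.2 - 1)) ^ (m + 2))⁻¹)
      (Icc 0 1 ×ˢ K) := by
    refine ContinuousOn.integrableOn_compact (isCompact_Icc.prod hK) ?_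
    refine (continuous_fst.pow m).continuousOn.mul (ContinuousOn.inv₀ ?_ fun p hp =>
      pow_ne_zero _ (hD p hp).ne')
    exact (continuousOn_const.add (continuous_fst.continuousOn.mul
      ((hg.comp continuous_snd.continuousOn fun p hp => hp.2).sub continuousOn_const))).pow _
  rw [Measure.volume_eq_prod, ← setIntegral_prod_swap, setIntegral_prod, ← integral_const_mul]
  swap
  · exact (hF.mono_set (prod_mono Ioc_subset_Icc_self subset_rfl)).swap
  refine setIntegral_congr_fun hK.measurableSet fun z hz => ?_
  rw [← mul_inv, ← integral_Ioc_pow_mul_inv_one_add_mul_pow m (hpos z hz)]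
  rfl

theorem setIntegral_iUnion_le_sum {α ι : Type*} [MeasurableSpace α] [Fintype ι] {μ : Measure α}
    {s : ι → Set α} {f : α → ℝ} (hf0 : ∀ i, 0 ≤ᵐ[μ.restrict (s i)] f)
    (hfi : ∀ i, IntegrableOn f (s i) μ) :
    ∫ x in ⋃ i, s i, f x ∂μ ≤ ∑ i, ∫ x in s i, f x ∂μ := by
  rw [← integral_finsetSum_measure fun i _ => hfi i]
  exact integral_mono_measure (Measure.restrict_iUnion_le.trans (Measure.sum_fintype _).le)
    (ae_finsetSum_measure_iff.2 fun i _ => hf0 i) (integrable_finsetSum_measure.2 fun i _ => hfi i)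

theorem pow_mul_le_pow_succ_div_pow {a W Z : ℝ} (ha : 0 ≤ a) (hW : 0 < W) (h : a * W ≤ Z)
    (k : ℕ) : a ^ k * Z ≤ Z ^ (k + 1) / W ^ k := by
  have hZ : 0 ≤ Z := (mul_nonneg ha hW.le).trans h
  rw [le_div_iff₀ (pow_pos hW k)]
  calc a ^ k * Z * W ^ k = (a * W) ^ k * Z := by ring
    _ ≤ Z ^ k * Z := by gcongr
    _ = Z ^ (k + 1) := by ring

section HausdorffComparison

variable {ι X : Type*} [Fintype ι] [EMetricSpace X] [MeasurableSpace X] [BorelSpace X]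
  {j : (ι → ℝ) → X} {s : X → ι → ℝ}

theorem map_restrict_volume_le_hausdorffMeasure (hj : Measurable j) (hs : LipschitzWith 1 s)
    (hsj : LeftInverse s j) (K : Set (ι → ℝ)) :
    (volume.restrict K).map j ≤ (μH[Fintype.card ι] : Measure X).restrict (j '' K) := by
  refine Measure.le_intro fun A hA _ => ?_
  rw [Measure.map_apply hj hA, Measure.restrict_apply (hj hA), Measure.restrict_apply hA,
    ← hsj.image_image (j ⁻¹' A ∩ K)]
  calc volume (s '' (j '' (j ⁻¹' A ∩ K)))
      ≤ μH[(Fintype.card ι : ℝ)] (j '' (j ⁻¹' A ∩ K)) := by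
        simpa using hs.hausdorffMeasure_image_le (Nat.cast_nonneg (Fintype.card ι)) _
    _ ≤ μH[(Fintype.card ι : ℝ)] (A ∩ j '' K) := by
        gcongr
        rintro _ ⟨z, ⟨hzA, hzK⟩, rfl⟩
        exact ⟨hzA, z, hzK, rfl⟩

theorem setIntegral_le_setIntegral_hausdorffMeasure_image {κ : ℝ≥0} (hj : LipschitzWith κ j)
    (hs : LipschitzWith 1 s) (hsj : LeftInverse s j) {K : Set (ι → ℝ)} (hK : IsCompact K)
    {f : X → ℝ} (hfm : Measurable f) (hf : ContinuousOn f (j '' K))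
    (hf0 : ∀ x ∈ j '' K, 0 ≤ f x) :
    ∫ z in K, f (j z) ≤ ∫ x in j '' K, f x ∂μH[Fintype.card ι] := by
  have hjK : IsCompact (j '' K) := hK.image hj.continuous
  have hfin : μH[(Fintype.card ι : ℝ)] (j '' K) ≠ ∞ := by
    refine ne_top_of_le_ne_top ?_ (hj.hausdorffMeasure_image_le (Nat.cast_nonneg _) K)
    rw [hausdorffMeasure_pi_real]
    exact ENNReal.mul_ne_top (by simp) hK.measure_lt_top.ne
  obtain ⟨M, hM⟩ := hjK.exists_bound_of_continuousOn hf
  rw [← integral_map hj.continuous.aemeasurable hfm.aestronglyMeasurable]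
  refine integral_mono_measure (map_restrict_volume_le_hausdorffMeasure hj.continuous.measurable
    hs hsj K) ((ae_restrict_iff' hjK.measurableSet).2 (ae_of_all _ hf0)) ?_
  exact Measure.integrableOn_of_bounded hfin hfm.aestronglyMeasurable
    ((ae_restrict_iff' hjK.measurableSet).2 (ae_of_all _ hM))

end HausdorffComparison

-- The apex is left out (`t ∈ (0, 1]`) so that the cone map below is injective on the parameters.
def coneOver {E : Type*} [SMul ℝ E] (F : Set E) : Set E :=
  (fun p : ℝ × E => p.1 • p.2) '' (Ioc 0 1 ×ˢ F)

theorem image_coneOver {E E' : Type*} [SMul ℝ E] [SMul ℝ E'] {f : E → E'}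
    (hf : ∀ (t : ℝ) x, f (t • x) = t • f x) (F : Set E) : f '' coneOver F = coneOver (f '' F) := by
  rw [coneOver, coneOver, ← image_id (Ioc (0 : ℝ) 1), ← prodMap_image_prod, image_id,
    ← image_comp, ← image_comp]
  exact image_congr fun p _ => hf p.1 p.2

theorem MeasurableEquiv.piFinSuccAbove_zero_apply {m : ℕ} {α : Type*} [MeasurableSpace α]
    (w : Fin (m + 1) → α) :
    MeasurableEquiv.piFinSuccAbove (fun _ => α) 0 w = (w 0, Fin.tail w) := by
  simp [MeasurableEquiv.piFinSuccAbove_apply, Fin.insertNthEquiv, Fin.removeNth_zero]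

theorem MeasurableEquiv.piFinSuccAbove_zero_symm_apply {m : ℕ} {α : Type*} [MeasurableSpace α]
    (p : α × (Fin m → α)) :
    (MeasurableEquiv.piFinSuccAbove (fun _ => α) 0).symm p = Fin.cons p.1 p.2 := by
  simp [MeasurableEquiv.piFinSuccAbove_symm_apply, Fin.insertNthEquiv]

section ConeMap

variable {m : ℕ} (a : ℝ)

-- In the coordinates `t = w 0`, `z = Fin.tail w`, this is `(t, z) ↦ t • (a, z)`.
def coneMap (w : Fin (m + 1) → ℝ) : Fin (m + 1) → ℝ :=
  w 0 • Fin.cons a (Fin.tail w)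

theorem coneMap_apply_zero (w : Fin (m + 1) → ℝ) : coneMap a w 0 = w 0 * a := rfl

theorem coneMap_apply_succ (w : Fin (m + 1) → ℝ) (k : Fin m) :
    coneMap a w k.succ = w 0 * w k.succ := rfl

theorem coneMap_cons (t : ℝ) (z : Fin m → ℝ) :
    coneMap a (Fin.cons t z) = t • Fin.cons a z := by
  simp [coneMap]

theorem injOn_coneMap (ha : a ≠ 0) : InjOn (coneMap a) {w : Fin (m + 1) → ℝ | w 0 ≠ 0} := by
  intro w hw w' _ h
  have h0 : w 0 = w' 0 := by
    simpa [coneMap_apply_zero, ha] using congrFun h 0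
  funext i
  induction i using Fin.cases with
  | zero => exact h0
  | succ k =>
    have := congrFun h k.succ
    rw [coneMap_apply_succ, coneMap_apply_succ, ← h0] at this
    exact mul_left_cancel₀ hw this

theorem image_coneMap_preimage_piFinSuccAbove (K : Set (Fin m → ℝ)) :
    coneMap a '' (MeasurableEquiv.piFinSuccAbove (fun _ => ℝ) 0 ⁻¹' (Ioc 0 1 ×ˢ K)) =
      coneOver (Fin.cons (α := fun _ => ℝ) a '' K) := by
  rw [← MeasurableEquiv.image_symm, ← image_comp, coneOver, ← image_id (Ioc (0 : ℝ) 1),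
    ← prodMap_image_prod, ← image_comp, image_id]
  refine image_congr fun p _ => ?_
  rw [comp_apply, comp_apply, MeasurableEquiv.piFinSuccAbove_zero_symm_apply, coneMap_cons]
  rfl

def coneMapDeriv (w : Fin (m + 1) → ℝ) : (Fin (m + 1) → ℝ) →L[ℝ] Fin (m + 1) → ℝ :=
  ContinuousLinearMap.pi <| Fin.cons (a • ContinuousLinearMap.proj 0) fun k =>
    w 0 • ContinuousLinearMap.proj k.succ + w k.succ • ContinuousLinearMap.proj 0

theorem hasFDerivAt_coneMap (w : Fin (m + 1) → ℝ) :
    HasFDerivAt (coneMap a) (coneMapDeriv a w) w := by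
  refine hasFDerivAt_pi'.2 fun i => ?_
  rw [coneMapDeriv, ContinuousLinearMap.proj_pi]
  induction i using Fin.cases with
  | zero =>
    simpa [coneMap, mul_comm] using
      (ContinuousLinearMap.proj (R := ℝ) (φ := fun _ : Fin (m + 1) => ℝ) 0).hasFDerivAt.mul_const a
  | succ k =>
    simpa [coneMap, Fin.tail] using
      (ContinuousLinearMap.proj (R := ℝ) (φ := fun _ : Fin (m + 1) => ℝ) 0).hasFDerivAt.fun_mul
        (ContinuousLinearMap.proj (R := ℝ) (φ := fun _ : Fin (m + 1) => ℝ) k.succ).hasFDerivAt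

theorem det_coneMapDeriv (w : Fin (m + 1) → ℝ) : (coneMapDeriv a w).det = a * w 0 ^ m := by
  classical
  rw [ContinuousLinearMap.det, ← LinearMap.det_toMatrix']
  set M := LinearMap.toMatrix' (coneMapDeriv a w : (Fin (m + 1) → ℝ) →ₗ[ℝ] Fin (m + 1) → ℝ)
  have hM0 : ∀ j, M 0 j = a * Pi.single (M := fun _ => ℝ) 0 1 j := by
    intro j
    simp [M, coneMapDeriv, Pi.single_apply, eq_comm]
  have hMs : ∀ (k : Fin m) j, M k.succ j = w 0 * Pi.single (M := fun _ => ℝ) k.succ 1 j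
      + w k.succ * Pi.single (M := fun _ => ℝ) 0 1 j := by
    intro k j
    simp [M, coneMapDeriv, Pi.single_apply, eq_comm]
  have hlower : M.IsLowerTriangular := by
    intro i j hij
    induction i using Fin.cases with
    | zero =>
      have hj : (0 : Fin (m + 1)) < j := hij
      simp [hM0, hj.ne']
    | succ k =>
      have hj : k.succ < j := hij
      simp [hMs, hj.ne', ((Fin.succ_pos k).trans hj).ne']
  rw [Matrix.det_of_isLowerTriangular M hlower, Fin.prod_univ_succ, hM0]
  simp [hMs, Fin.succ_ne_zero]

theorem setIntegral_coneOver_image_cons (ha : a ≠ 0) {K : Set (Fin m → ℝ)} (hK : MeasurableSet K)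
    (f : (Fin (m + 1) → ℝ) → ℝ) :
    ∫ w in coneOver (Fin.cons (α := fun _ => ℝ) a '' K), f w =
      ∫ p in Ioc (0 : ℝ) 1 ×ˢ K, |a| * p.1 ^ m * f (p.1 • Fin.cons a p.2) := by
  set π := MeasurableEquiv.piFinSuccAbove (fun _ : Fin (m + 1) => ℝ) 0
  have hS : MeasurableSet (π ⁻¹' (Ioc 0 1 ×ˢ K)) := π.measurable (measurableSet_Ioc.prod hK)
  have hpos : ∀ w ∈ π ⁻¹' (Ioc 0 1 ×ˢ K), 0 < w 0 := fun w hw => by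
    simpa [π, MeasurableEquiv.piFinSuccAbove_zero_apply] using hw.1.1
  rw [← image_coneMap_preimage_piFinSuccAbove,
    integral_image_eq_integral_abs_det_fderiv_smul volume hS
    (fun w _ => (hasFDerivAt_coneMap a w).hasFDerivWithinAt)
    ((injOn_coneMap a ha).mono fun w hw => (hpos w hw).ne'),
    ← (volume_preserving_piFinSuccAbove _ 0).setIntegral_preimage_emb π.measurableEmbedding]
  refine setIntegral_congr_fun hS fun w hw => ?_
  rw [det_coneMapDeriv, MeasurableEquiv.piFinSuccAbove_zero_apply, ← coneMap_cons,
    Fin.cons_self_tail, smul_eq_mul, abs_mul, abs_pow, abs_of_pos (hpos w hw)]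

end ConeMap

theorem OrthonormalBasis.exists_apply_eq {E : Type*} [NormedAddCommGroup E] [InnerProductSpace ℝ E]
    [FiniteDimensional ℝ E] {ι : Type*} [Fintype ι] (hcard : Module.finrank ℝ E = Fintype.card ι)
    (i₀ : ι) {e : E} (he : ‖e‖ = 1) : ∃ B : OrthonormalBasis ι ℝ E, B i₀ = e := by
  have ho : Orthonormal ℝ (({i₀} : Set ι).domRestrict fun _ => e) :=
    ⟨fun _ => he, fun i j hij => (hij (Subsingleton.elim i j)).elim⟩
  obtain ⟨B, hB⟩ := ho.exists_orthonormalBasis_extension_of_card_eq hcard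
  exact ⟨B, hB i₀ rfl⟩

theorem Fin.lipschitzWith_cons {m : ℕ} (a : ℝ) :
    LipschitzWith 1 (Fin.cons (α := fun _ : Fin (m + 1) => ℝ) a) := by
  refine LipschitzWith.of_dist_le_mul fun x y => ?_
  simp [dist_pi_le_iff dist_nonneg, Fin.forall_fin_succ, dist_le_pi_dist]

theorem Fin.lipschitzWith_tail {m : ℕ} :
    LipschitzWith 1 (Fin.tail : (Fin (m + 1) → ℝ) → Fin m → ℝ) := by
  refine LipschitzWith.of_dist_le_mul fun x y => ?_
  simpa [Fin.tail, dist_pi_le_iff dist_nonneg] using fun i : Fin m => dist_le_pi_dist x y i.succ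

theorem exists_coords_apply_zero_eq_inner {m : ℕ} {e : EuclideanSpace ℝ (Fin (m + 1))}
    (he : ‖e‖ = 1) :
    ∃ ψ : EuclideanSpace ℝ (Fin (m + 1)) ≃L[ℝ] (Fin (m + 1) → ℝ),
      MeasurePreserving ψ.symm ∧ LipschitzWith 1 ψ ∧ ∀ x, ψ x 0 = ⟪e, x⟫ := by
  obtain ⟨B, hB⟩ := OrthonormalBasis.exists_apply_eq (by simp) (0 : Fin (m + 1)) he
  refine ⟨B.repr.toContinuousLinearEquiv.trans (EuclideanSpace.equiv (Fin (m + 1)) ℝ),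
    B.measurePreserving_repr_symm.comp (PiLp.volume_preserving_toLp _), ?_, fun x => ?_⟩
  · have h := (PiLp.lipschitzWith_ofLp 2 (fun _ : Fin (m + 1) => ℝ)).comp B.repr.isometry.lipschitz
    rwa [one_mul] at h
  · rw [← hB]
    exact B.repr_apply_apply x 0

theorem setIntegral_coneOver_image_cons_inv_pow {m : ℕ} {c : ℝ} (hc : 0 < c)
    {K : Set (Fin m → ℝ)} (hK : IsCompact K) (φ : (Fin (m + 1) → ℝ) →L[ℝ] ℝ)
    (hφ : ∀ z ∈ K, 0 < 1 + φ (Fin.cons (-c) z)) :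
    ∫ w in coneOver (Fin.cons (α := fun _ => ℝ) (-c) '' K), ((1 + φ w) ^ (m + 2))⁻¹ =
      c / (m + 1) * ∫ z in K, ((1 + φ (Fin.cons (-c) z)) ^ (m + 1))⁻¹ := by
  set g : (Fin m → ℝ) → ℝ := fun z => 1 + φ (Fin.cons (-c) z)
  calc ∫ w in coneOver (Fin.cons (α := fun _ => ℝ) (-c) '' K), ((1 + φ w) ^ (m + 2))⁻¹
      = ∫ p in Ioc (0 : ℝ) 1 ×ˢ K, c * (p.1 ^ m * ((1 + p.1 * (g p.2 - 1)) ^ (m + 2))⁻¹) := by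
        rw [setIntegral_coneOver_image_cons _ (neg_ne_zero.2 hc.ne') hK.measurableSet]
        refine setIntegral_congr_fun (measurableSet_Ioc.prod hK.measurableSet) fun p _ => ?_
        simp only [map_smul, smul_eq_mul, abs_neg, abs_of_pos hc, g]
        ring
    _ = c / (m + 1) * ∫ z in K, (g z ^ (m + 1))⁻¹ := by
        rw [integral_const_mul, setIntegral_Ioc_prod_pow_mul_inv_one_add_mul_pow hK
          (by fun_prop) hφ, ← mul_assoc, div_eq_mul_inv]

theorem setIntegral_coneOver_inv_pow_le {m : ℕ} {e : EuclideanSpace ℝ (Fin (m + 1))}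
    (he : ‖e‖ = 1) {c : ℝ} (hc : 0 < c) {F : Set (EuclideanSpace ℝ (Fin (m + 1)))}
    (hF : IsCompact F) (hFe : ∀ y ∈ F, ⟪e, y⟫ = -c) (b' : EuclideanSpace ℝ (Fin (m + 1)))
    (hb : ∀ y ∈ F, 0 < 1 + ⟪b', y⟫) :
    ∫ x in coneOver F, ((1 + ⟪b', x⟫) ^ (m + 2))⁻¹ ≤
      c / (m + 1) * ∫ y in F, ((1 + ⟪b', y⟫) ^ (m + 1))⁻¹ ∂μH[m] := by
  -- `ψ` maps `F` into the hyperplane `{w | w 0 = -c}`.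
  obtain ⟨ψ, hψmp, hψlip, hψ0⟩ := exists_coords_apply_zero_eq_inner he
  set j : (Fin m → ℝ) → EuclideanSpace ℝ (Fin (m + 1)) := fun z => ψ.symm (Fin.cons (-c) z)
  set s : EuclideanSpace ℝ (Fin (m + 1)) → Fin m → ℝ := fun x => Fin.tail (ψ x)
  set K := s '' F
  have hsj : LeftInverse s j := fun z => by simp [s, j]
  have hjK : j '' K = F := by
    rw [image_image]
    refine (image_congr fun y hy => ?_).trans (image_id F)
    simp only [j, s]
    rw [← hFe y hy, ← hψ0, Fin.cons_self_tail, ContinuousLinearEquiv.symm_apply_apply, id]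
  have hK : IsCompact K := hF.image (Fin.lipschitzWith_tail.continuous.comp ψ.continuous)
  have hs : LipschitzWith 1 s := by
    have h := Fin.lipschitzWith_tail.comp hψlip
    rwa [one_mul] at h
  have hf : Continuous fun y : EuclideanSpace ℝ (Fin (m + 1)) => 1 + ⟪b', y⟫ := by fun_prop
  have hcomp := setIntegral_le_setIntegral_hausdorffMeasure_image
    (j := j) (f := fun y => ((1 + ⟪b', y⟫) ^ (m + 1))⁻¹)
    (ψ.symm.lipschitz.comp (Fin.lipschitzWith_cons (-c))) hs hsj hK
    ((hf.pow (m + 1)).measurable.inv) ((hf.pow (m + 1)).continuousOn.inv₀ fun y hy =>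
      pow_ne_zero _ (hb y (hjK ▸ hy)).ne') fun y hy => inv_nonneg.2 (pow_pos (hb y (hjK ▸ hy)) _).le
  rw [Fintype.card_fin, hjK] at hcomp
  have hcone : coneOver F = ψ.symm '' coneOver (Fin.cons (α := fun _ => ℝ) (-c) '' K) := by
    rw [image_coneOver (map_smul ψ.symm), image_image, ← hjK]
  calc ∫ x in coneOver F, ((1 + ⟪b', x⟫) ^ (m + 2))⁻¹
      = ∫ w in coneOver (Fin.cons (α := fun _ => ℝ) (-c) '' K),
          ((1 + (innerSL ℝ b' ∘L (ψ.symm : (Fin (m + 1) → ℝ) →L[ℝ] _)) w) ^ (m + 2))⁻¹ := by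
        rw [hcone, hψmp.setIntegral_image_emb ψ.symm.toHomeomorph.measurableEmbedding]
        rfl
    _ = c / (m + 1) * ∫ z in K, ((1 + ⟪b', j z⟫) ^ (m + 1))⁻¹ :=
        setIntegral_coneOver_image_cons_inv_pow hc hK _ fun z hz =>
          hb _ (hjK ▸ mem_image_of_mem j hz)
    _ ≤ c / (m + 1) * ∫ y in F, ((1 + ⟪b', y⟫) ^ (m + 1))⁻¹ ∂μH[m] :=
        mul_le_mul_of_nonneg_left hcomp (by positivity)

namespace LabeledPolytope

variable {n d : ℕ} (P : LabeledPolytope n d)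

theorem continuous_L (l : Fin d) : Continuous (P.L l) := by
  unfold L; fun_prop

theorem convex_Delta : Convex ℝ P.Delta := by
  simp only [Delta, ofPred_forall]
  refine convex_iInter fun l => ?_
  have h := convex_halfSpace_ge (innerₛₗ ℝ (P.u l)).isLinear (-P.lam l)
  simpa [L, neg_le_iff_add_nonneg] using h

theorem isClosed_Delta : IsClosed P.Delta := by
  simp only [Delta, ofPred_forall]
  exact isClosed_iInter fun l => isClosed_le continuous_const (P.continuous_L l)

theorem isClosed_facet (l : Fin d) : IsClosed (P.Facet l) :=
  P.isClosed_Delta.inter (isClosed_eq (P.continuous_L l) continuous_const)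

theorem coneOver_facet_subset_Delta (h0 : 0 ∈ P.Delta) (l : Fin d) :
    coneOver (P.Facet l) ⊆ P.Delta := by
  rintro _ ⟨⟨t, y⟩, ⟨ht, hy⟩, rfl⟩
  exact P.convex_Delta.smul_mem_of_zero_mem h0 hy.1 (Ioc_subset_Icc_self ht)

theorem mem_interior_of_forall_L_pos {x : EuclideanSpace ℝ (Fin n)} (hx : ∀ l, 0 < P.L l x) :
    x ∈ interior P.Delta := by
  refine interior_maximal (t := {y | ∀ l, 0 < P.L l y}) (fun y hy l => (hy l).le) ?_ hx
  simp only [ofPred_forall]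
  exact isOpen_iInter_of_finite fun l => isOpen_lt continuous_const (P.continuous_L l)

-- Push `x` out along its ray to the last point `r • x` of `Δ`; some constraint is active there.
theorem exists_mem_coneOver_facet (hΔ : IsCompact P.Delta) {x : EuclideanSpace ℝ (Fin n)}
    (hx : x ∈ P.Delta) (hx0 : x ≠ 0) : ∃ l, x ∈ coneOver (P.Facet l) := by
  have hray : IsCompact ((· • x) ⁻¹' P.Delta : Set ℝ) :=
    (isClosedEmbedding_smul_left hx0).isCompact_preimage hΔ
  obtain ⟨r, ⟨hr1, hrx⟩, hmax⟩ := (hray.inter_left isClosed_Ici).exists_isGreatest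
    ⟨1, mem_Ici.2 le_rfl, by simpa using hx⟩
  obtain ⟨l, hl⟩ : ∃ l, P.L l (r • x) = 0 := by
    by_contra! hne
    have hint := P.mem_interior_of_forall_L_pos fun l => (hrx l).lt_of_ne' (hne l)
    obtain ⟨ε, hε, hball⟩ := Metric.isOpen_iff.1
      (isOpen_interior.preimage (continuous_id.smul continuous_const)) r hint
    have hball' : r + ε / 2 ∈ Metric.ball r ε := by
      rw [Real.ball_eq_Ioo, mem_Ioo]; constructor <;> linarith
    have hmem : r + ε / 2 ∈ Ici 1 ∩ (· • x) ⁻¹' P.Delta :=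
      ⟨by simp only [mem_Ici] at hr1 ⊢; linarith, interior_subset (s := P.Delta) (hball hball')⟩
    linarith [hmax hmem]
  have hr0 : 0 < r := zero_lt_one.trans_le hr1
  refine ⟨l, (r⁻¹, r • x), ⟨⟨inv_pos.2 hr0, inv_le_one_of_one_le₀ hr1⟩, hrx, hl⟩, ?_⟩
  simp [smul_smul, inv_mul_cancel₀ hr0.ne']

theorem integrableOn_inv_bval_pow (hΔ : IsCompact P.Delta) {b' : EuclideanSpace ℝ (Fin n)}
    (hb' : b' ∈ P.Omega) (k : ℕ) : IntegrableOn (fun x => (bval (1, b') x ^ k)⁻¹) P.Delta := by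
  refine ContinuousOn.integrableOn_compact hΔ (ContinuousOn.inv₀ ?_ fun x hx =>
    pow_ne_zero _ (hb' x hx).ne')
  unfold bval
  fun_prop

theorem integral_facetMeasure_inv_bval_pow_nonneg {b' : EuclideanSpace ℝ (Fin n)}
    (hb' : b' ∈ P.Omega) (l : Fin d) (k : ℕ) :
    0 ≤ ∫ y, (bval (1, b') y ^ k)⁻¹ ∂P.facetMeasure l := by
  refine integral_nonneg_of_ae (Measure.ae_smul_measure ?_ _)
  exact (ae_restrict_iff' (P.isClosed_facet l).measurableSet).2
    (ae_of_all _ fun y hy => inv_nonneg.2 (pow_pos (hb' y hy.1) k).le)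

namespace IsLabeledPolytope

variable {P}

-- If `u_l = 0`, then `F_l = Δ` would have dimension `n`.
theorem u_ne_zero (hP : P.IsLabeledPolytope) (l : Fin d) : P.u l ≠ 0 := by
  intro hu
  obtain ⟨y, hy⟩ := hP.facet_nonempty l
  have hlam : P.lam l = 0 := by simpa [L, hu] using hy.2
  have hF : P.Facet l = P.Delta := by
    ext x
    simp [Facet, L, hu, hlam]
  have hspan : affineSpan ℝ (P.Facet l) = ⊤ := by
    rw [hF]
    exact affineSpan_eq_top_of_nonempty_interior
      (hP.int_nonempty.mono (interior_mono (subset_convexHull ℝ _)))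
  have hdim := hP.facet_dim l
  rw [hspan, AffineSubspace.direction_top, finrank_top, finrank_euclideanSpace_fin] at hdim
  have := hP.npos
  omega

-- If `λ_l = 0`, the linear form `⟪u_l, ·⟫` would have a local minimum at `0`, forcing `u_l = 0`.
theorem lam_pos (hP : P.IsLabeledPolytope) (h0 : 0 ∈ interior P.Delta) (l : Fin d) :
    0 < P.lam l := by
  have hlam : 0 ≤ P.lam l := by simpa [L] using interior_subset h0 l
  refine hlam.lt_of_ne fun hlam0 => hP.u_ne_zero l ?_
  have hmin : IsLocalMin (fun x => ⟪P.u l, x⟫) 0 := by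
    filter_upwards [mem_interior_iff_mem_nhds.1 h0] with x hx
    simpa [L, ← hlam0] using hx l
  have h := hmin.hasFDerivAt_eq_zero (innerSL ℝ (P.u l)).hasFDerivAt
  simpa using congrArg (fun φ => φ (P.u l)) h

theorem setIntegral_coneOver_facet_le (hP : P.IsLabeledPolytope) (h0 : 0 ∈ interior P.Delta)
    {b' : EuclideanSpace ℝ (Fin n)} (hb' : b' ∈ P.Omega) (l : Fin d) :
    ∫ x in coneOver (P.Facet l), (bval (1, b') x ^ (n + 1))⁻¹ ≤
      P.lam l / n * ∫ y, (bval (1, b') y ^ n)⁻¹ ∂P.facetMeasure l := by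
  obtain ⟨m, rfl⟩ : ∃ m, n = m + 1 := ⟨n - 1, by have := hP.npos; omega⟩
  have hu := hP.u_ne_zero l
  have hnu : 0 < ‖P.u l‖ := norm_pos_iff.2 hu
  have hFe : ∀ y ∈ P.Facet l, ⟪‖P.u l‖⁻¹ • P.u l, y⟫ = -(P.lam l / ‖P.u l‖) := fun y hy => by
    rw [real_inner_smul_left, eq_neg_add_of_add_eq hy.2]
    ring
  have h := setIntegral_coneOver_inv_pow_le (norm_smul_inv_norm hu)
    (div_pos (hP.lam_pos h0 l) hnu)
    (hP.compact.of_isClosed_subset (P.isClosed_facet l) fun _ hy => hy.1) hFe b'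
    (fun y hy => hb' y hy.1)
  have hdim : ((m + 1 : ℕ) : ℝ) - 1 = m := by push_cast; ring
  rw [facetMeasure, integral_smul_measure, ENNReal.toReal_ofReal (inv_nonneg.2 hnu.le), hdim]
  refine h.trans_eq ?_
  simp only [bval, smul_eq_mul]
  push_cast
  ring

theorem ae_le_iUnion_coneOver_facet (hP : P.IsLabeledPolytope) :
    P.Delta ≤ᵐ[volume] ⋃ l, coneOver (P.Facet l) := by
  have : Nontrivial (EuclideanSpace ℝ (Fin n)) := by
    have : Nonempty (Fin n) := ⟨⟨0, hP.npos⟩⟩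
    infer_instance
  refine ae_le_set.2 (measure_mono_null (fun x hx => ?_) (measure_singleton 0))
  by_contra hx0
  exact hx.2 (mem_iUnion.2 (P.exists_mem_coneOver_facet hP.compact hx.1 hx0))

theorem W00_le_mul_Z0 (hP : P.IsLabeledPolytope) (h0 : 0 ∈ interior P.Delta) {lamMax : ℝ}
    (hle : ∀ l, P.L l 0 ≤ lamMax) {b' : EuclideanSpace ℝ (Fin n)} (hb' : b' ∈ P.Omega) :
    P.W00 (1, b') ≤ lamMax / (2 * n) * P.Z0 (1, b') := by
  have hg := P.integrableOn_inv_bval_pow hP.compact hb' (n + 1)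
  have hg0 : ∀ᵐ x ∂volume.restrict P.Delta, 0 ≤ (bval (1, b') x ^ (n + 1))⁻¹ :=
    ae_restrict_of_forall_mem P.isClosed_Delta.measurableSet fun x hx =>
      inv_nonneg.2 (pow_pos (hb' x hx) _).le
  have hcone := P.coneOver_facet_subset_Delta (interior_subset h0)
  calc P.W00 (1, b') ≤ ∫ x in ⋃ l, coneOver (P.Facet l), (bval (1, b') x ^ (n + 1))⁻¹ :=
        setIntegral_mono_set (hg.mono_set (iUnion_subset hcone))
          (ae_restrict_of_ae_restrict_of_subset (iUnion_subset hcone) hg0)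
          hP.ae_le_iUnion_coneOver_facet
    _ ≤ ∑ l, ∫ x in coneOver (P.Facet l), (bval (1, b') x ^ (n + 1))⁻¹ :=
        setIntegral_iUnion_le_sum (fun l => ae_restrict_of_ae_restrict_of_subset (hcone l) hg0)
          fun l => hg.mono_set (hcone l)
    _ ≤ ∑ l, P.lam l / n * ∫ y, (bval (1, b') y ^ n)⁻¹ ∂P.facetMeasure l :=
        Finset.sum_le_sum fun l _ => hP.setIntegral_coneOver_facet_le h0 hb' l
    _ ≤ ∑ l, lamMax / n * ∫ y, (bval (1, b') y ^ n)⁻¹ ∂P.facetMeasure l := by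
        gcongr with l
        · exact P.integral_facetMeasure_inv_bval_pow_nonneg hb' l n
        · simpa [L] using hle l
    _ = lamMax / (2 * n) * P.Z0 (1, b') := by
        rw [Z0, ← Finset.mul_sum]
        ring

theorem W00_pos (hP : P.IsLabeledPolytope) {b' : EuclideanSpace ℝ (Fin n)} (hb' : b' ∈ P.Omega) :
    0 < P.W00 (1, b') := by
  rw [W00, setIntegral_pos_iff_support_of_nonneg_ae (ae_restrict_of_forall_mem
    P.isClosed_Delta.measurableSet fun x hx => inv_nonneg.2 (pow_pos (hb' x hx) _).le)
    (P.integrableOn_inv_bval_pow hP.compact hb' (n + 1))]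
  exact (Measure.measure_pos_of_nonempty_interior _ hP.int_nonempty).trans_le
    (measure_mono fun x hx => ⟨inv_ne_zero (pow_pos (hb' x hx) _).ne', hx⟩)

end IsLabeledPolytope

end LabeledPolytope

open LabeledPolytope in
/-- If `0` lies in the interior of `Δ` and `λ = max_l L_l(0)`, then
`λ > 0` and for every `b ∈ Ω`: `F(b) ≥ (2n/λ)ⁿ · Z₀(b)`. -/
theorem stmt8 {n d : ℕ} (P : LabeledPolytope n d) (hP : P.IsLabeledPolytope)
    (h0 : (0 : EuclideanSpace ℝ (Fin n)) ∈ interior P.Delta)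
    (lamMax : ℝ) (hle : ∀ l, P.L l 0 ≤ lamMax) (hmem : ∃ l, lamMax = P.L l 0) :
    0 < lamMax ∧
      ∀ b' ∈ P.Omega,
        (2 * (n : ℝ) / lamMax) ^ n * P.Z0 (1, b') ≤ P.Fcal b' := by
  obtain ⟨l₀, rfl⟩ := hmem
  have hlam : 0 < P.L l₀ 0 := by simpa [L] using hP.lam_pos h0 l₀
  refine ⟨hlam, fun b' hb' => pow_mul_le_pow_succ_div_pow (by positivity) (hP.W00_pos hb') ?_ n⟩
  have hn : (0 : ℝ) < n := by exact_mod_cast hP.npos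
  calc 2 * n / P.L l₀ 0 * P.W00 (1, b')
      ≤ 2 * n / P.L l₀ 0 * (P.L l₀ 0 / (2 * n) * P.Z0 (1, b')) := by
        gcongr
        exact hP.W00_le_mul_Z0 h0 hle hb'
    _ = P.Z0 (1, b') := by field_simp
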